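/- For integers a ≥ 2 and m with 1 < m ≤ a, the value 2am is a counterexample for the coin system (1, a, 2a, (m-1)(2a-1)+a): the optimal representation of 2am uses m coins of value 2a, but the greedy representation uses more than m coins. -/
import Mathlib


/-- The largest coin value in `C` that is at most `v` (or 0 if none). -/
def coinMax (C : List ℕ) (v : ℕ) : ℕ := (C.filter (· ≤ v)).foldr max 0

/-- Fuelled greedy coin count. -/
def grdAux (C : List ℕ) : ℕ → ℕ → ℕ
  | 0, _ => 0
  | fuel + 1, v =>
    let c := coinMax C v
    if v = 0 ∨ c = 0 then 0 else 1 + grdAux C fuel (v - c)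

/-- Number of coins used by the greedy algorithm to represent `v` with coin system `C`. -/
def grd (C : List ℕ) (v : ℕ) : ℕ := grdAux C v v

/-- The set of sizes of representations of `v` as nonnegative integer combinations of
the coin values in `C`. -/
def reprCosts (C : List ℕ) (v : ℕ) : Set ℕ :=
  {k | ∃ x : List ℕ, x.length = C.length ∧ (List.zipWith (· * ·) x C).sum = v ∧ x.sum = k}

/-- Minimum number of coins needed to represent `v` with coin system `C`. -/
noncomputable def opt (C : List ℕ) (v : ℕ) : ℕ := sInf (reprCosts C v)

/-- A coin system is orderly if greedy is optimal for every positive value. -/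
def Orderly (C : List ℕ) : Prop := ∀ v : ℕ, 0 < v → grd C v = opt C v

lemma coinMax_le (C : List ℕ) (v : ℕ) : coinMax C v ≤ v := by
  induction C with
  | nil => simp [coinMax]
  | cons c C ih =>
    unfold coinMax at *
    by_cases h : c ≤ v <;> simp [List.filter_cons, h] <;> omega

lemma grdAux_zero (C : List ℕ) (f : ℕ) : grdAux C f 0 = 0 := by
  cases f <;> simp [grdAux]

lemma grdAux_congr (C : List ℕ) : ∀ f1 f2 v, v ≤ f1 → v ≤ f2 →
    grdAux C f1 v = grdAux C f2 v := by
  intro f1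
  induction f1 with
  | zero => intro f2 v h1 _; interval_cases v; simp [grdAux_zero]
  | succ f ih =>
    intro f2 v h1 h2
    rcases f2 with _ | f2
    · interval_cases v; simp [grdAux_zero]
    rcases Nat.eq_zero_or_pos v with rfl | hv
    · simp [grdAux_zero]
    simp only [grdAux]
    by_cases h : v = 0 ∨ coinMax C v = 0
    · simp [h]
    · simp only [h, if_false]
      have hc : 0 < coinMax C v := by omega
      have := coinMax_le C v
      rw [ih f2 (v - coinMax C v) (by omega) (by omega)]

lemma grd_step (C : List ℕ) (v : ℕ) (hv : 0 < v) (hc : 0 < coinMax C v) :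
    grd C v = 1 + grd C (v - coinMax C v) := by
  unfold grd
  rcases Nat.exists_eq_succ_of_ne_zero hv.ne' with ⟨f, rfl⟩
  simp only [grdAux]
  have h1 := coinMax_le C (f+1)
  rw [if_neg (by omega)]
  congr 1
  exact grdAux_congr C f _ _ (by omega) (by omega)

/-- greedy count for the specific system, abstracting the top coin `b`. -/
lemma grd_val (a m b v : ℕ) (ha : 2 ≤ a) (hm : 2 ≤ m) (hma : m ≤ a)
    (hv : v = b + (m + a - 1)) (hb : 2 * a ≤ b) :
    grd [1, a, 2 * a, b] v = m + 1 := by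
  set C : List ℕ := [1, a, 2 * a, b] with hC
  have hsmall : ∀ n, n < a → grd C n = n := by
    intro n
    induction n with
    | zero => intro _; simp [grd, grdAux_zero]
    | succ k ih =>
      intro hk
      have hc : coinMax C (k + 1) = 1 := by
        have h1 : (1 : ℕ) ≤ k + 1 := by omega
        have h2 : ¬ a ≤ k + 1 := by omega
        have h3 : ¬ 2 * a ≤ k + 1 := by omega
        have h4 : ¬ b ≤ k + 1 := by omega
        simp [coinMax, hC, List.filter_cons, h1, h2, h3, h4]
      rw [grd_step C (k + 1) (by omega) (by omega)]
      rw [hc]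
      simp only [Nat.add_sub_cancel]
      rw [ih (by omega)]
      omega
  have hc0 : coinMax C v = b := by
    have h1 : (1 : ℕ) ≤ v := by omega
    have h2 : a ≤ v := by omega
    have h3 : 2 * a ≤ v := by omega
    have h4 : b ≤ v := by omega
    simp [coinMax, hC, List.filter_cons, h1, h2, h3, h4]
    omega
  rw [grd_step C v (by omega) (by omega), hc0]
  have hv1 : v - b = m + a - 1 := by omega
  rw [hv1]
  have hc1 : coinMax C (m + a - 1) = a := by
    have h1 : (1 : ℕ) ≤ m + a - 1 := by omega
    have h2 : a ≤ m + a - 1 := by omega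
    have h3 : ¬ 2 * a ≤ m + a - 1 := by omega
    have h4 : ¬ b ≤ m + a - 1 := by omega
    simp [coinMax, hC, List.filter_cons, h1, h2, h3, h4]
    omega
  rw [grd_step C (m + a - 1) (by omega) (by omega), hc1]
  have hv2 : m + a - 1 - a = m - 1 := by omega
  rw [hv2, hsmall (m - 1) (by omega)]
  omega

theorem stmt_18 (a m : ℕ) (ha : 2 ≤ a) (hm1 : 1 < m) (hma : m ≤ a) :
    opt [1, a, 2 * a, (m - 1) * (2 * a - 1) + a] (2 * a * m) = m ∧
    m < grd [1, a, 2 * a, (m - 1) * (2 * a - 1) + a] (2 * a * m) := by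
  obtain ⟨A, rfl⟩ : ∃ A, a = A + 2 := ⟨a - 2, by omega⟩
  obtain ⟨M, rfl⟩ : ∃ M, m = M + 2 := ⟨m - 2, by omega⟩
  have hMA : M ≤ A := by omega
  have e1 : (M + 2 - 1) * (2 * (A + 2) - 1) + (A + 2)
      = (M + 1) * (2 * A + 3) + (A + 2) := by
    have : M + 2 - 1 = M + 1 := by omega
    rw [this]
    have : 2 * (A + 2) - 1 = 2 * A + 3 := by omega
    rw [this]
  rw [e1]
  set b : ℕ := (M + 1) * (2 * A + 3) + (A + 2) with hb
  set v : ℕ := 2 * (A + 2) * (M + 2) with hv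
  have hbv : v = b + ((M + 2) + (A + 2) - 1) := by
    have : (M + 2) + (A + 2) - 1 = M + A + 3 := by omega
    rw [this, hb, hv]; ring
  have hb2 : 2 * (A + 2) ≤ b := by
    have : b = 2 * (A + 2) + (2 * A * M + 3 * M + A + 1) := by rw [hb]; ring
    omega
  clear_value b v
  constructor
  · -- opt = m
    apply le_antisymm
    · apply Nat.sInf_le
      refine ⟨[0, 0, M + 2, 0], by simp, ?_, by simp⟩
      simp only [List.zipWith, List.sum_cons, List.sum_nil]
      rw [hv]; ring
    · -- lower bound
      have hlb : ∀ k ∈ reprCosts [1, A + 2, 2 * (A + 2), b] v, M + 2 ≤ k := by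
        rintro k ⟨x, hlen, hsum, rfl⟩
        simp only [List.length_cons, List.length_nil] at hlen
        rcases x with _ | ⟨p, _ | ⟨q, _ | ⟨r, _ | ⟨s, _ | t⟩⟩⟩⟩ <;> simp at hlen
        simp only [List.zipWith, List.sum_cons, List.sum_nil, List.sum_cons] at hsum ⊢
        rw [hv] at hsum
        rw [hb] at hsum
        rcases s with _ | _ | s
        · -- s = 0
          by_contra h
          push_neg at h
          nlinarith
        · -- s = 1
          have hr : r = 0 := by nlinarith
          subst hr
          have hq : q ≤ 1 := by nlinarith
          interval_cases q <;> omega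
        · -- s ≥ 2
          exfalso
          have h2b : 2 * ((M + 1) * (2 * A + 3) + (A + 2))
              ≤ (s + 1 + 1) * ((M + 1) * (2 * A + 3) + (A + 2)) :=
            Nat.mul_le_mul_right _ (by omega)
          have hlt : 2 * (A + 2) * (M + 2) < 2 * ((M + 1) * (2 * A + 3) + (A + 2)) := by
            nlinarith
          generalize hT : (s + 1 + 1) * ((M + 1) * (2 * A + 3) + (A + 2)) = T at h2b hsum
          generalize hW : 2 * ((M + 1) * (2 * A + 3) + (A + 2)) = W at h2b hlt
          generalize hV : 2 * (A + 2) * (M + 2) = V at hlt hsum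
          generalize hX : q * (A + 2) = X at hsum
          generalize hY : r * (2 * (A + 2)) = Y at hsum
          omega
      have hne : (reprCosts [1, A + 2, 2 * (A + 2), b] v).Nonempty := by
        refine ⟨M + 2, [0, 0, M + 2, 0], by simp, ?_, by simp⟩
        simp only [List.zipWith, List.sum_cons, List.sum_nil]
        rw [hv]; ring
      exact hlb _ (Nat.sInf_mem hne)
  · -- greedy part
    rw [grd_val (A + 2) (M + 2) b v (by omega) (by omega) (by omega) hbv hb2]
    omega
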